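/- arXiv:2306.10846 — 4 statements merged into one kernel-verified Lean document; each statement's English description precedes it below -/
import Mathlib

section
/- Let α ∈ (0,1) and let c₀ = (2(1−α)/3)^{1/(1−α)} and c₁ = (2(1−α))^{1/(1−α)}. Then for every k ≥ 1, P(τ_k ≤ c₀ k^{1/(1−α)}) ≤ 2 e^{−k/18} and P(τ_k ≥ c₁ k^{1/(1−α)}) ≤ 2 e^{−k/6}. (In particular c₁ > c₀ > 0 depend on α only.) -/
/-!
`τ_k` is an increasing function of `S_k`, which is almost surely nonnegative, so the two events
are `{S_k ≤ 2k/3}` and `{S_k ≥ 2k}`. For a sum of `k` i.i.d. `Exp(1)` variables the Chernoff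
bound with the optimal parameter `t = 1 - 1/a` gives `P(S_k ≥ a k) ≤ (a e^{1-a})^k` for `a ≥ 1`
and `P(S_k ≤ a k) ≤ (a e^{1-a})^k` for `a ≤ 1`; at `a = 2/3` and `a = 2` the bases are at most
`e^{-1/18}` and `e^{-1/6}`.
-/

open MeasureTheory ProbabilityTheory Real Filter

/-- The points `τ_k = ((1-α) S_k)^{1/(1-α)}` of the Poisson process with rate `t^{-α}`,
where `S_k = E_0 + ⋯ + E_{k-1}` is a sum of i.i.d. rate-1 exponentials. -/
noncomputable def tauPoly (α : ℝ) {Ω : Type*} (E : ℕ → Ω → ℝ) (k : ℕ) (ω : Ω) : ℝ :=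
  ((1 - α) * ∑ i ∈ Finset.range k, E i ω) ^ (1 / (1 - α))

section ExponentialMGF

variable {r t : ℝ}

lemma expMeasure_eq_withDensity (r : ℝ) :
    expMeasure r = volume.withDensity fun x => ENNReal.ofReal (exponentialPDFReal r x) := rfl

lemma exp_mul_mul_exponentialPDFReal (r t x : ℝ) :
    exp (t * x) * exponentialPDFReal r x =
      (Set.Ici 0).indicator (fun x => r * exp ((t - r) * x)) x := by
  by_cases hx : 0 ≤ x
  · rw [Set.indicator_of_mem (Set.mem_Ici.mpr hx), exponentialPDFReal, gammaPDFReal, if_pos hx]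
    simp only [rpow_one, Gamma_one, div_one, sub_self, rpow_zero, mul_one]
    rw [mul_left_comm, ← exp_add]
    ring_nf
  · rw [Set.indicator_of_notMem (by simpa using hx), exponentialPDFReal, gammaPDFReal, if_neg hx,
      mul_zero]

lemma integrable_exp_mul_expMeasure (hr : 0 < r) (ht : t < r) :
    Integrable (fun x => exp (t * x)) (expMeasure r) := by
  rw [expMeasure_eq_withDensity, integrable_withDensity_iff
    (measurable_exponentialPDFReal r).ennreal_ofReal (ae_of_all _ fun _ => ENNReal.ofReal_lt_top)]
  simp only [ENNReal.toReal_ofReal (exponentialPDFReal_nonneg hr _),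
    exp_mul_mul_exponentialPDFReal]
  rw [integrable_indicator_iff measurableSet_Ici, integrableOn_Ici_iff_integrableOn_Ioi]
  exact (integrableOn_exp_mul_Ioi (by linarith) 0).const_mul r

lemma integral_exp_mul_expMeasure (hr : 0 < r) (ht : t < r) :
    ∫ x, exp (t * x) ∂expMeasure r = r / (r - t) := by
  rw [expMeasure_eq_withDensity, integral_withDensity_eq_integral_toReal_smul
    (measurable_exponentialPDFReal r).ennreal_ofReal (ae_of_all _ fun _ => ENNReal.ofReal_lt_top)]
  simp only [ENNReal.toReal_ofReal (exponentialPDFReal_nonneg hr _), smul_eq_mul,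
    mul_comm (exponentialPDFReal r _), exp_mul_mul_exponentialPDFReal]
  rw [integral_indicator measurableSet_Ici, integral_Ici_eq_integral_Ioi, integral_const_mul,
    integral_exp_mul_Ioi (by linarith) 0, mul_zero, exp_zero, neg_div, ← div_neg, neg_sub,
    mul_one_div]

lemma ae_nonneg_expMeasure (r : ℝ) : ∀ᵐ x ∂expMeasure r, 0 ≤ x := by
  simp only [ae_iff, not_le]
  exact (withDensity_apply _ measurableSet_Iio).trans (lintegral_exponentialPDF_of_nonpos le_rfl)

end ExponentialMGF

section ExponentialLaw

variable {Ω : Type*} [MeasurableSpace Ω] {μ : Measure Ω} {X : Ω → ℝ} {r t : ℝ}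

lemma integrable_exp_mul_of_map_eq_expMeasure (hX : AEMeasurable X μ)
    (hlaw : μ.map X = expMeasure r) (hr : 0 < r) (ht : t < r) :
    Integrable (fun ω => exp (t * X ω)) μ :=
  (hlaw ▸ integrable_exp_mul_expMeasure hr ht).comp_aemeasurable hX

lemma mgf_of_map_eq_expMeasure (hX : AEMeasurable X μ) (hlaw : μ.map X = expMeasure r)
    (hr : 0 < r) (ht : t < r) : mgf X μ t = r / (r - t) := by
  rw [← mgf_id_map hX, hlaw, mgf]
  exact integral_exp_mul_expMeasure hr ht

lemma ae_nonneg_of_map_eq_expMeasure (hX : AEMeasurable X μ) (hlaw : μ.map X = expMeasure r) :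
    ∀ᵐ ω ∂μ, 0 ≤ X ω :=
  ae_of_ae_map hX (hlaw ▸ ae_nonneg_expMeasure r)

end ExponentialLaw

section IIDExponentialSum

variable {Ω ι : Type*} [MeasurableSpace Ω] {μ : Measure Ω} {E : ι → Ω → ℝ} {r t a : ℝ}

lemma mgf_sum_of_iid_exp (hmeas : ∀ i, Measurable (E i)) (hindep : iIndepFun E μ)
    (hlaw : ∀ i, μ.map (E i) = expMeasure r) (hr : 0 < r) (ht : t < r) (s : Finset ι) :
    mgf (∑ i ∈ s, E i) μ t = (r / (r - t)) ^ s.card := by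
  rw [hindep.mgf_sum hmeas, Finset.prod_congr rfl fun i _ =>
    mgf_of_map_eq_expMeasure (hmeas i).aemeasurable (hlaw i) hr ht, Finset.prod_const]

lemma ae_sum_nonneg_of_iid_exp (hmeas : ∀ i, Measurable (E i))
    (hlaw : ∀ i, μ.map (E i) = expMeasure r) (s : Finset ι) :
    ∀ᵐ ω ∂μ, 0 ≤ ∑ i ∈ s, E i ω :=
  (s.eventually_all.mpr fun i _ => ae_nonneg_of_map_eq_expMeasure (hmeas i).aemeasurable
    (hlaw i)).mono fun _ hω => Finset.sum_nonneg hω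

/-- The Chernoff bound `e^{-t a n} (1 - t)^{-n}` at its minimiser `t = 1 - a⁻¹`. -/
lemma exp_chernoff_optimal_eq (ha : 0 < a) (n : ℕ) :
    exp (-(1 - a⁻¹) * (a * n)) * (1 / (1 - (1 - a⁻¹))) ^ n = (a * exp (1 - a)) ^ n := by
  rw [mul_pow, ← exp_nat_mul, mul_comm]
  congr 2 <;> field_simp <;> ring

variable [IsProbabilityMeasure μ]

lemma measureReal_sum_ge_le_of_iid_exp (hmeas : ∀ i, Measurable (E i)) (hindep : iIndepFun E μ)
    (hlaw : ∀ i, μ.map (E i) = expMeasure 1) (ha : 1 ≤ a) (s : Finset ι) :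
    μ.real {ω | a * s.card ≤ ∑ i ∈ s, E i ω} ≤ (a * exp (1 - a)) ^ s.card := by
  have ht : 1 - a⁻¹ < 1 := sub_lt_self 1 (inv_pos.mpr (by linarith))
  have hint := hindep.integrable_exp_mul_sum hmeas (s := s) fun i _ =>
    integrable_exp_mul_of_map_eq_expMeasure (hmeas i).aemeasurable (hlaw i) one_pos ht
  have := measure_ge_le_exp_mul_mgf (a * s.card) (sub_nonneg.mpr (inv_le_one_of_one_le₀ ha)) hint
  rw [mgf_sum_of_iid_exp hmeas hindep hlaw one_pos ht, exp_chernoff_optimal_eq (by linarith)] at this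
  simpa only [Finset.sum_apply] using this

lemma measureReal_sum_le_le_of_iid_exp (hmeas : ∀ i, Measurable (E i)) (hindep : iIndepFun E μ)
    (hlaw : ∀ i, μ.map (E i) = expMeasure 1) (ha₀ : 0 < a) (ha : a ≤ 1) (s : Finset ι) :
    μ.real {ω | ∑ i ∈ s, E i ω ≤ a * s.card} ≤ (a * exp (1 - a)) ^ s.card := by
  have ht : 1 - a⁻¹ < 1 := sub_lt_self 1 (inv_pos.mpr (by linarith))
  have hint := hindep.integrable_exp_mul_sum hmeas (s := s) fun i _ =>
    integrable_exp_mul_of_map_eq_expMeasure (hmeas i).aemeasurable (hlaw i) one_pos ht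
  have := measure_le_le_exp_mul_mgf (a * s.card) (sub_nonpos.mpr (one_le_inv₀ ha₀ |>.mpr ha)) hint
  rw [mgf_sum_of_iid_exp hmeas hindep hlaw one_pos ht, exp_chernoff_optimal_eq ha₀] at this
  simpa only [Finset.sum_apply] using this

end IIDExponentialSum

section Numerics

lemma two_mul_exp_one_sub_two_le : 2 * exp (1 - 2) ≤ exp (-(1 / 6)) := by
  have h : 2 ≤ exp (5 / 6) := by
    calc (2 : ℝ) = exp (log 2) := (exp_log two_pos).symm
      _ ≤ exp (5 / 6) := exp_le_exp.mpr (by linarith [log_two_lt_d9])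
  rw [show -(1 / 6 : ℝ) = 5 / 6 + (1 - 2) by norm_num, exp_add]
  exact mul_le_mul_of_nonneg_right h (exp_pos _).le

lemma exp_seven_div_eighteen_le : exp (7 / 18) ≤ 3 / 2 := by
  refine (pow_le_pow_iff_left₀ (exp_pos _).le (by norm_num) (by norm_num : 18 ≠ 0)).mp ?_
  calc exp (7 / 18) ^ 18 = exp 1 ^ 7 := by rw [← exp_nat_mul, ← exp_nat_mul]; norm_num
    _ ≤ 2.7182818286 ^ 7 := pow_le_pow_left₀ (exp_pos _).le exp_one_lt_d9.le 7
    _ ≤ (3 / 2) ^ 18 := by norm_num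

lemma two_div_three_mul_exp_one_sub_le : 2 / 3 * exp (1 - 2 / 3) ≤ exp (-(1 / 18)) := by
  rw [show (1 - 2 / 3 : ℝ) = 7 / 18 + -(1 / 18) by norm_num, exp_add, ← mul_assoc]
  refine mul_le_of_le_one_left (exp_pos _).le ?_
  linarith [exp_seven_div_eighteen_le]

lemma pow_le_two_mul_exp_neg_div {q d : ℝ} (hq₀ : 0 ≤ q) (hq : q ≤ exp (-(1 / d))) (k : ℕ) :
    q ^ k ≤ 2 * exp (-k / d) :=
  calc q ^ k ≤ exp (-(1 / d)) ^ k := pow_le_pow_left₀ hq₀ hq k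
    _ = exp (-k / d) := by rw [← exp_nat_mul]; ring_nf
    _ ≤ 2 * exp (-k / d) := le_mul_of_one_le_left (exp_pos _).le one_le_two

end Numerics

section PoissonPoints

variable {α b : ℝ} {Ω : Type*} {E : ℕ → Ω → ℝ} {k : ℕ} {ω : Ω}

lemma rpow_mul_rpow_le_tauPoly_iff (hα : α < 1) (hb : 0 ≤ b)
    (hS : 0 ≤ ∑ i ∈ Finset.range k, E i ω) :
    (b * (1 - α)) ^ (1 / (1 - α)) * (k : ℝ) ^ (1 / (1 - α)) ≤ tauPoly α E k ω ↔
      b * k ≤ ∑ i ∈ Finset.range k, E i ω := by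
  have h1α : 0 < 1 - α := sub_pos.mpr hα
  rw [tauPoly, ← mul_rpow (by positivity) k.cast_nonneg,
    rpow_le_rpow_iff (by positivity) (by positivity) (one_div_pos.mpr h1α), mul_right_comm,
    mul_comm (1 - α), mul_le_mul_iff_of_pos_right h1α]

lemma tauPoly_le_rpow_mul_rpow_iff (hα : α < 1) (hb : 0 ≤ b)
    (hS : 0 ≤ ∑ i ∈ Finset.range k, E i ω) :
    tauPoly α E k ω ≤ (b * (1 - α)) ^ (1 / (1 - α)) * (k : ℝ) ^ (1 / (1 - α)) ↔
      ∑ i ∈ Finset.range k, E i ω ≤ b * k := by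
  have h1α : 0 < 1 - α := sub_pos.mpr hα
  rw [tauPoly, ← mul_rpow (by positivity) k.cast_nonneg,
    rpow_le_rpow_iff (by positivity) (by positivity) (one_div_pos.mpr h1α), mul_right_comm,
    mul_comm (1 - α), mul_le_mul_iff_of_pos_right h1α]

variable [MeasurableSpace Ω] {μ : Measure Ω} [IsProbabilityMeasure μ]

lemma measure_tauPoly_le_le (hmeas : ∀ i, Measurable (E i)) (hindep : iIndepFun E μ)
    (hlaw : ∀ i, μ.map (E i) = expMeasure 1) (hα : α < 1) (hb₀ : 0 < b) (hb : b ≤ 1) (k : ℕ) :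
    μ {ω | tauPoly α E k ω ≤ (b * (1 - α)) ^ (1 / (1 - α)) * (k : ℝ) ^ (1 / (1 - α))} ≤
      ENNReal.ofReal ((b * exp (1 - b)) ^ k) :=
  calc _ ≤ μ {ω | ∑ i ∈ Finset.range k, E i ω ≤ b * k} :=
        measure_mono_ae <| (ae_sum_nonneg_of_iid_exp hmeas hlaw _).mono fun _ hS h =>
          (tauPoly_le_rpow_mul_rpow_iff hα hb₀.le hS).mp h
    _ = ENNReal.ofReal (μ.real {ω | ∑ i ∈ Finset.range k, E i ω ≤ b * k}) :=
        (ofReal_measureReal (measure_ne_top _ _)).symm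
    _ ≤ _ := ENNReal.ofReal_le_ofReal <| by
        simpa only [Finset.card_range] using
          measureReal_sum_le_le_of_iid_exp hmeas hindep hlaw hb₀ hb (Finset.range k)

lemma measure_le_tauPoly_le (hmeas : ∀ i, Measurable (E i)) (hindep : iIndepFun E μ)
    (hlaw : ∀ i, μ.map (E i) = expMeasure 1) (hα : α < 1) (hb : 1 ≤ b) (k : ℕ) :
    μ {ω | (b * (1 - α)) ^ (1 / (1 - α)) * (k : ℝ) ^ (1 / (1 - α)) ≤ tauPoly α E k ω} ≤
      ENNReal.ofReal ((b * exp (1 - b)) ^ k) :=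
  calc _ ≤ μ {ω | b * k ≤ ∑ i ∈ Finset.range k, E i ω} :=
        measure_mono_ae <| (ae_sum_nonneg_of_iid_exp hmeas hlaw _).mono fun _ hS h =>
          (rpow_mul_rpow_le_tauPoly_iff hα (by linarith) hS).mp h
    _ = ENNReal.ofReal (μ.real {ω | b * k ≤ ∑ i ∈ Finset.range k, E i ω}) :=
        (ofReal_measureReal (measure_ne_top _ _)).symm
    _ ≤ _ := ENNReal.ofReal_le_ofReal <| by
        simpa only [Finset.card_range] using
          measureReal_sum_ge_le_of_iid_exp hmeas hindep hlaw hb (Finset.range k)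

end PoissonPoints

theorem stmt0 {Ω : Type*} [MeasurableSpace Ω] (μ : Measure Ω) [IsProbabilityMeasure μ]
    (α : ℝ) (hα : α ∈ Set.Ioo (0:ℝ) 1)
    (E : ℕ → Ω → ℝ) (hEmeas : ∀ k, Measurable (E k))
    (hEindep : iIndepFun E μ)
    (hEdist : ∀ k, Measure.map (E k) μ = expMeasure 1)
    (c₀ c₁ : ℝ)
    (hc₀ : c₀ = (2 * (1 - α) / 3) ^ (1 / (1 - α)))
    (hc₁ : c₁ = (2 * (1 - α)) ^ (1 / (1 - α))) :
    0 < c₀ ∧ c₀ < c₁ ∧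
      ∀ k : ℕ, 1 ≤ k →
        μ {ω | tauPoly α E k ω ≤ c₀ * (k : ℝ) ^ (1 / (1 - α))}
            ≤ ENNReal.ofReal (2 * Real.exp (-(k : ℝ) / 18)) ∧
        μ {ω | c₁ * (k : ℝ) ^ (1 / (1 - α)) ≤ tauPoly α E k ω}
            ≤ ENNReal.ofReal (2 * Real.exp (-(k : ℝ) / 6)) := by
  have h1α : 0 < 1 - α := sub_pos.mpr hα.2
  rw [show 2 * (1 - α) / 3 = 2 / 3 * (1 - α) by ring] at hc₀
  subst hc₀ hc₁
  refine ⟨by positivity, rpow_lt_rpow (by positivity) (by linarith) (one_div_pos.mpr h1α),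
    fun k _ => ⟨?_, ?_⟩⟩
  · exact (measure_tauPoly_le_le hEmeas hEindep hEdist hα.2 (by norm_num) (by norm_num) k).trans
      (ENNReal.ofReal_le_ofReal <|
        pow_le_two_mul_exp_neg_div (by positivity) two_div_three_mul_exp_one_sub_le k)
  · exact (measure_le_tauPoly_le hEmeas hEindep hEdist hα.2 (by norm_num) k).trans
      (ENNReal.ofReal_le_ofReal <|
        pow_le_two_mul_exp_neg_div (by positivity) two_mul_exp_one_sub_two_le k)
end

section
/- Let J₀(x) = Σ_{m=0}^∞ (−1)^m (x/2)^{2m} / (m!)² be the Bessel function of the first kind of order zero. Then for all x ≥ 0, |J₀(x)| ≤ (1 + x²)^{−1/4}. -/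
open Real

/-- The Bessel function of the first kind of order zero,
`J₀(x) = Σ_{m=0}^∞ (−1)^m (x/2)^{2m} / (m!)²`. -/
noncomputable def besselJ0 (x : ℝ) : ℝ :=
  ∑' m : ℕ, (-1)^m * (x/2)^(2*m) / (Nat.factorial m : ℝ)^2

/-!
Write `t = x²/4`, so that `J₀(x) = F₀(t)` and `J₁(x) = (x/2) F₁(t)` for the entire series
`F₀(t) = Σ (-1)ⁿ tⁿ/(n!)²` and `F₁(t) = Σ (-1)ⁿ tⁿ/(n!(n+1)!)`; termwise differentiation gives
`F₀' = -F₁` and `(t F₁)' = F₀`, hence `J₀' = -J₁` and `J₁' = J₀ - J₁/x`. In both cases below we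
show `J₀(x)⁴ (1 + x²) ≤ 1`.

For `x ≤ 2` the series of `F₀` is alternating with decreasing terms, so
`0 ≤ 1 - t ≤ J₀(x) ≤ (1 - t/2)² ≤ exp(-t)`, while `1 + x² ≤ exp(4t)`.

For `x ≥ 2` the function `E = x (J₀² + J₁²) - J₀ J₁ + J₀²/(2x)` has `E' = -J₀²/(2x²) ≤ 0`, and
alternating-series bounds at `x = 2` give `E(2) ≤ 3/4`. Since
`4x E = (2x J₁ - J₀)² + (4x² + 1) J₀²`, we get `J₀²(4x² + 1) ≤ 3x`, and `9x²(1 + x²) ≤ (4x² + 1)²`.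
-/

open Finset Nat

section FactorialDecay

variable {a : ℕ → ℝ}

theorem summable_mul_pow_of_abs_le_one_div_factorial (ha : ∀ n, |a n| ≤ 1 / n !) (t : ℝ) :
    Summable fun n => a n * t ^ n := by
  refine .of_norm_bounded (Real.summable_pow_div_factorial |t|) fun n => ?_
  rw [norm_mul, norm_pow, Real.norm_eq_abs, Real.norm_eq_abs, div_eq_mul_one_div, mul_comm]
  gcongr
  exact ha n

theorem hasDerivAt_tsum_mul_pow_succ (ha : ∀ n, |a n| ≤ 1 / n !) (t : ℝ) :
    HasDerivAt (fun s => ∑' n, a n * s ^ (n + 1)) (∑' n, (n + 1) * a n * t ^ n) t := by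
  set R := |t| + 1
  have hbound : ∀ n, ∀ y ∈ Metric.ball (0 : ℝ) R,
      ‖(n + 1) * a n * y ^ n‖ ≤ (2 * R) ^ n / n ! := fun n y hy => by
    have hyR : |y| ≤ R := by simpa using (Metric.mem_ball.1 hy).le
    have hn : (n + 1 : ℝ) ≤ 2 ^ n := by exact_mod_cast Nat.lt_two_pow_self
    calc ‖(n + 1) * a n * y ^ n‖ = (n + 1) * |a n| * |y| ^ n := by
          simp only [norm_mul, norm_pow, Real.norm_eq_abs,
            abs_of_nonneg (by positivity : (0 : ℝ) ≤ n + 1)]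
      _ ≤ 2 ^ n * (1 / n !) * R ^ n := by gcongr; exact ha n
      _ = (2 * R) ^ n / n ! := by rw [mul_pow]; ring
  refine hasDerivAt_tsum_of_isPreconnected (Real.summable_pow_div_factorial (2 * R))
    Metric.isOpen_ball (convex_ball 0 R).isPreconnected (fun n y _ => ?_) hbound
    (Metric.mem_ball_self (by positivity)) (by simp) (by simp [R])
  simpa [mul_comm, mul_left_comm, mul_assoc] using (hasDerivAt_pow (n + 1) y).const_mul (a n)

theorem hasDerivAt_tsum_mul_pow (ha : ∀ n, |a n| ≤ 1 / n !) (t : ℝ) :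
    HasDerivAt (fun s => ∑' n, a n * s ^ n) (∑' n, (n + 1) * a (n + 1) * t ^ n) t := by
  have ha' : ∀ n, |a (n + 1)| ≤ 1 / n ! := fun n =>
    (ha (n + 1)).trans (one_div_le_one_div_of_le (by positivity)
      (by exact_mod_cast factorial_le n.le_succ))
  have hsplit : (fun s => ∑' n, a n * s ^ n) = fun s => a 0 + ∑' n, a (n + 1) * s ^ (n + 1) := by
    ext s
    rw [(summable_mul_pow_of_abs_le_one_div_factorial ha s).tsum_eq_zero_add, pow_zero, mul_one]
  rw [hsplit]
  exact (hasDerivAt_tsum_mul_pow_succ ha' t).const_add (a 0)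

end FactorialDecay

theorem abs_neg_one_pow_div_le_one_div_factorial {n : ℕ} {d : ℝ} (hd : (n ! : ℝ) ≤ d) :
    |(-1) ^ n / d| ≤ 1 / n ! := by
  rw [abs_div, abs_neg_one_pow, abs_of_pos ((by positivity : (0 : ℝ) < n !).trans_le hd)]
  exact one_div_le_one_div_of_le (by positivity) hd

noncomputable def besselF0 (t : ℝ) : ℝ := ∑' n : ℕ, (-1) ^ n * (t ^ n / (n ! : ℝ) ^ 2)

noncomputable def besselF1 (t : ℝ) : ℝ := ∑' n : ℕ, (-1) ^ n * (t ^ n / ((n ! : ℝ) * (n + 1)!))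

noncomputable def besselJ1 (x : ℝ) : ℝ := x / 2 * besselF1 (x ^ 2 / 4)

theorem hasDerivAt_besselF0 (t : ℝ) : HasDerivAt besselF0 (-besselF1 t) t := by
  have hcoeff : ∀ n, |(-1) ^ n / (n ! : ℝ) ^ 2| ≤ 1 / (n ! : ℝ) := fun n =>
    abs_neg_one_pow_div_le_one_div_factorial
      (le_self_pow₀ (by exact_mod_cast n.factorial_pos) two_ne_zero)
  convert hasDerivAt_tsum_mul_pow hcoeff t using 1
  · ext s
    exact tsum_congr fun n => by ring
  · rw [besselF1, ← tsum_neg]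
    refine tsum_congr fun n => ?_
    push_cast [factorial_succ, pow_succ]
    field_simp

theorem hasDerivAt_mul_besselF1 (t : ℝ) :
    HasDerivAt (fun s => s * besselF1 s) (besselF0 t) t := by
  have hcoeff : ∀ n, |(-1) ^ n / ((n ! : ℝ) * (n + 1)!)| ≤ 1 / (n ! : ℝ) := fun n =>
    abs_neg_one_pow_div_le_one_div_factorial
      (le_mul_of_one_le_right (by positivity) (by exact_mod_cast (n + 1).factorial_pos))
  convert hasDerivAt_tsum_mul_pow_succ hcoeff t using 1
  · ext s
    rw [besselF1, ← tsum_mul_left]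
    exact tsum_congr fun n => by ring
  · refine tsum_congr fun n => ?_
    push_cast [factorial_succ]
    field_simp

theorem besselJ0_eq_besselF0 (x : ℝ) : besselJ0 x = besselF0 (x ^ 2 / 4) :=
  tsum_congr fun n => by rw [pow_mul, div_pow]; ring

theorem hasDerivAt_sq_div_four (x : ℝ) : HasDerivAt (fun y : ℝ => y ^ 2 / 4) (x / 2) x :=
  ((hasDerivAt_pow 2 x).div_const 4).congr_deriv (by norm_num; ring)

theorem hasDerivAt_besselJ0 (x : ℝ) : HasDerivAt besselJ0 (-besselJ1 x) x := by
  have hsq := hasDerivAt_sq_div_four x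
  rw [show besselJ0 = fun y => besselF0 (y ^ 2 / 4) from funext besselJ0_eq_besselF0]
  refine ((hasDerivAt_besselF0 _).comp x hsq).congr_deriv ?_
  rw [besselJ1]; ring

theorem hasDerivAt_besselJ1 {x : ℝ} (hx : x ≠ 0) :
    HasDerivAt besselJ1 (besselJ0 x - besselJ1 x / x) x := by
  have hsq := hasDerivAt_sq_div_four x
  have h := ((hasDerivAt_mul_besselF1 _).comp x hsq).mul ((hasDerivAt_inv hx).const_mul 2)
  have hJ1 : (fun y => (y ^ 2 / 4 * besselF1 (y ^ 2 / 4)) * (2 * y⁻¹)) =ᶠ[nhds x] besselJ1 := by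
    filter_upwards [eventually_ne_nhds hx] with y hy
    rw [besselJ1]; field_simp; ring
  refine (h.congr_of_eventuallyEq hJ1.symm).congr_deriv ?_
  rw [besselJ0_eq_besselF0, besselJ1]
  simp only [Function.comp]
  field_simp
  ring

theorem tsum_alternating_pow_div_mem_Icc {t : ℝ} (ht0 : 0 ≤ t) (ht1 : t ≤ 1) {d : ℕ → ℝ}
    (hd : Monotone d) (hfac : ∀ n, (n ! : ℝ) ≤ d n) (k : ℕ) :
    ∑' n, (-1) ^ n * (t ^ n / d n) ∈ Set.Icc (∑ n ∈ range (2 * k), (-1) ^ n * (t ^ n / d n))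
      (∑ n ∈ range (2 * k + 1), (-1) ^ n * (t ^ n / d n)) := by
  have hd0 : ∀ n, 0 < d n := fun n => (by positivity : (0 : ℝ) < n !).trans_le (hfac n)
  have hanti : Antitone fun n => t ^ n / d n := antitone_nat_of_succ_le fun n =>
    div_le_div₀ (by positivity) (pow_le_pow_of_le_one ht0 ht1 n.le_succ) (hd0 n) (hd n.le_succ)
  have hsum : Summable fun n => t ^ n / d n :=
    .of_nonneg_of_le (fun n => div_nonneg (pow_nonneg ht0 n) (hd0 n).le)
      (fun n => div_le_div_of_nonneg_left (pow_nonneg ht0 n) (by positivity) (hfac n))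
      (Real.summable_pow_div_factorial t)
  have hlim := hsum.tendsto_alternating_series_tsum
  exact ⟨hanti.alternating_series_le_tendsto hlim k, hanti.tendsto_le_alternating_series hlim k⟩

theorem besselF0_mem_Icc {t : ℝ} (ht0 : 0 ≤ t) (ht1 : t ≤ 1) (k : ℕ) :
    besselF0 t ∈ Set.Icc (∑ n ∈ range (2 * k), (-1) ^ n * (t ^ n / (n ! : ℝ) ^ 2))
      (∑ n ∈ range (2 * k + 1), (-1) ^ n * (t ^ n / (n ! : ℝ) ^ 2)) :=
  tsum_alternating_pow_div_mem_Icc ht0 ht1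
    (fun _ _ h => pow_le_pow_left₀ (by positivity) (by exact_mod_cast factorial_le h) 2)
    (fun n => le_self_pow₀ (by exact_mod_cast n.factorial_pos) two_ne_zero) k

theorem besselF1_mem_Icc {t : ℝ} (ht0 : 0 ≤ t) (ht1 : t ≤ 1) (k : ℕ) :
    besselF1 t ∈ Set.Icc (∑ n ∈ range (2 * k), (-1) ^ n * (t ^ n / ((n ! : ℝ) * (n + 1)!)))
      (∑ n ∈ range (2 * k + 1), (-1) ^ n * (t ^ n / ((n ! : ℝ) * (n + 1)!))) :=
  tsum_alternating_pow_div_mem_Icc ht0 ht1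
    (fun _ _ h => mul_le_mul (by exact_mod_cast factorial_le h)
      (by exact_mod_cast factorial_le (Nat.succ_le_succ h)) (by positivity) (by positivity))
    (fun n => le_mul_of_one_le_right (by positivity) (by exact_mod_cast (n + 1).factorial_pos)) k

theorem abs_besselJ0_le_of_sq_le_four {x : ℝ} (hx : x ^ 2 ≤ 4) :
    |besselJ0 x| ≤ (1 - x ^ 2 / 8) ^ 2 := by
  obtain ⟨hlow, hupp⟩ := besselF0_mem_Icc (t := x ^ 2 / 4) (by positivity) (by linarith) 1
  norm_num [sum_range_succ] at hlow hupp
  rw [besselJ0_eq_besselF0, abs_le]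
  constructor <;> nlinarith

theorem besselJ0_pow_four_mul_le_one_of_sq_le_four {x : ℝ} (hx : x ^ 2 ≤ 4) :
    besselJ0 x ^ 4 * (1 + x ^ 2) ≤ 1 := by
  have hJ : |besselJ0 x| ≤ exp (-(x ^ 2 / 4)) := calc
    |besselJ0 x| ≤ (1 - x ^ 2 / 8) ^ 2 := abs_besselJ0_le_of_sq_le_four hx
    _ ≤ exp (-(x ^ 2 / 8)) ^ 2 := by
        gcongr
        · linarith
        · linarith [add_one_le_exp (-(x ^ 2 / 8))]
    _ = exp (-(x ^ 2 / 4)) := by rw [← exp_nat_mul]; ring_nf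
  calc besselJ0 x ^ 4 * (1 + x ^ 2) ≤ exp (-(x ^ 2 / 4)) ^ 4 * exp (x ^ 2) := by
        rw [← (by decide : Even 4).pow_abs]
        gcongr
        linarith [add_one_le_exp (x ^ 2)]
    _ = 1 := by rw [← exp_nat_mul, ← exp_add]; ring_nf; exact exp_zero

noncomputable def besselE (x : ℝ) : ℝ :=
  x * (besselJ0 x ^ 2 + besselJ1 x ^ 2) - besselJ0 x * besselJ1 x + besselJ0 x ^ 2 / (2 * x)

theorem hasDerivAt_besselE {x : ℝ} (hx : x ≠ 0) :
    HasDerivAt besselE (-besselJ0 x ^ 2 / (2 * x ^ 2)) x := by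
  have hJ0 := hasDerivAt_besselJ0 x
  have hJ1 := hasDerivAt_besselJ1 hx
  have h := (((hasDerivAt_id x).mul ((hJ0.pow 2).add (hJ1.pow 2))).sub (hJ0.mul hJ1)).add
    ((hJ0.pow 2).div ((hasDerivAt_id x).const_mul 2) (mul_ne_zero two_ne_zero hx))
  refine h.congr_deriv ?_
  simp only [id, Pi.add_apply, Pi.pow_apply]
  field_simp
  ring

theorem antitoneOn_besselE : AntitoneOn besselE (Set.Ioi 0) := by
  have hderiv : ∀ x ∈ Set.Ioi (0 : ℝ), HasDerivAt besselE (-besselJ0 x ^ 2 / (2 * x ^ 2)) x :=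
    fun x hx => hasDerivAt_besselE (ne_of_gt hx)
  refine antitoneOn_of_deriv_nonpos (convex_Ioi 0)
    (fun x hx => (hderiv x hx).continuousAt.continuousWithinAt)
    (fun x hx => (hderiv x (interior_subset hx)).differentiableAt.differentiableWithinAt)
    (fun x hx => ?_)
  rw [(hderiv x (interior_subset hx)).deriv, neg_div]
  exact neg_nonpos.2 (by positivity)

theorem four_mul_mul_besselE {x : ℝ} (hx : x ≠ 0) :
    4 * x * besselE x =
      (2 * x * besselJ1 x - besselJ0 x) ^ 2 + (4 * x ^ 2 + 1) * besselJ0 x ^ 2 := by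
  rw [besselE]
  field_simp
  ring

theorem besselE_two_le : besselE 2 ≤ 3 / 4 := by
  obtain ⟨hJ0low, hJ0upp⟩ := besselF0_mem_Icc (t := 1) zero_le_one le_rfl 2
  obtain ⟨hF1low, hF1upp⟩ := besselF1_mem_Icc (t := 1) zero_le_one le_rfl 1
  have hJ0 : besselJ0 2 = besselF0 1 := by rw [besselJ0_eq_besselF0]; norm_num
  have hJ1 : besselJ1 2 = besselF1 1 := by rw [besselJ1]; norm_num
  norm_num [sum_range_succ, factorial] at hJ0low hJ0upp hF1low hF1upp
  rw [besselE, hJ0, hJ1]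
  nlinarith

theorem besselJ0_pow_four_mul_le_one_of_two_le {x : ℝ} (hx : 2 ≤ x) :
    besselJ0 x ^ 4 * (1 + x ^ 2) ≤ 1 := by
  have hx0 : 0 < x := by linarith
  have hE : 4 * x * besselE x ≤ 3 * x := by
    nlinarith [antitoneOn_besselE (show (0 : ℝ) < 2 by norm_num) hx0 hx, besselE_two_le]
  have hJ : besselJ0 x ^ 2 * (4 * x ^ 2 + 1) ≤ 3 * x := by
    nlinarith [four_mul_mul_besselE hx0.ne', sq_nonneg (2 * x * besselJ1 x - besselJ0 x)]
  have hpos : 0 < (4 * x ^ 2 + 1) ^ 2 := by positivity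
  refine le_of_mul_le_mul_right ?_ hpos
  calc besselJ0 x ^ 4 * (1 + x ^ 2) * (4 * x ^ 2 + 1) ^ 2
      = (besselJ0 x ^ 2 * (4 * x ^ 2 + 1)) ^ 2 * (1 + x ^ 2) := by ring
    _ ≤ (3 * x) ^ 2 * (1 + x ^ 2) := by gcongr
    _ ≤ 1 * (4 * x ^ 2 + 1) ^ 2 := by nlinarith [sq_nonneg (x ^ 2 - 1)]

theorem abs_le_rpow_neg_one_div_four_of_pow_four_mul_le_one {a y : ℝ} (hy : 0 < y)
    (h : a ^ 4 * y ≤ 1) : |a| ≤ y ^ (-(1 / 4) : ℝ) := by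
  rw [← pow_le_pow_iff_left₀ (abs_nonneg a) (rpow_nonneg hy.le _) four_ne_zero,
    (by decide : Even 4).pow_abs, ← rpow_natCast (y ^ _), ← rpow_mul hy.le]
  rw [show (-(1 / 4) : ℝ) * (4 : ℕ) = -1 by norm_num]
  rwa [rpow_neg_one, ← one_div, le_div_iff₀ hy]

theorem stmt13 (x : ℝ) (hx : 0 ≤ x) :
    |besselJ0 x| ≤ (1 + x^2) ^ (-(1/4) : ℝ) := by
  refine abs_le_rpow_neg_one_div_four_of_pow_four_mul_le_one (by positivity) ?_
  rcases le_total x 2 with hx2 | hx2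
  · exact besselJ0_pow_four_mul_le_one_of_sq_le_four (by nlinarith)
  · exact besselJ0_pow_four_mul_le_one_of_two_le hx2
end

section
/- For every s > 0, ∫_0^∞ e^{−u} (1 + s² u²)^{−1/4} du ≤ √(π / s). -/
open MeasureTheory Real

theorem stmt15 (s : ℝ) (hs : 0 < s) :
    ∫ u in Set.Ioi (0:ℝ), Real.exp (-u) * (1 + s^2 * u^2) ^ (-(1/4) : ℝ)
      ≤ Real.sqrt (π / s) := by
  have hgamma : IntegrableOn (fun x : ℝ => rexp (-x) * x ^ ((1:ℝ)/2 - 1)) (Set.Ioi 0) :=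
    Real.GammaIntegral_convergent (by norm_num)
  have hg : IntegrableOn (fun u : ℝ => s ^ (-(1/2):ℝ) * (rexp (-u) * u ^ ((1:ℝ)/2 - 1)))
      (Set.Ioi 0) := hgamma.const_mul _
  -- pointwise bound
  have hpt : ∀ u ∈ Set.Ioi (0:ℝ),
      rexp (-u) * (1 + s^2 * u^2) ^ (-(1/4) : ℝ)
        ≤ s ^ (-(1/2):ℝ) * (rexp (-u) * u ^ ((1:ℝ)/2 - 1)) := by
    intro u hu
    have hu0 : 0 < u := hu
    have h1 : (1 + s^2 * u^2 : ℝ) ^ (-(1/4) : ℝ) ≤ (s^2 * u^2) ^ (-(1/4) : ℝ) := by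
      apply Real.rpow_le_rpow_of_nonpos (by positivity) (by nlinarith) (by norm_num)
    have h2 : (s^2 * u^2 : ℝ) ^ (-(1/4) : ℝ) = s ^ (-(1/2):ℝ) * u ^ ((1:ℝ)/2 - 1) := by
      rw [Real.mul_rpow (by positivity) (by positivity),
        ← Real.rpow_natCast s 2, ← Real.rpow_natCast u 2,
        ← Real.rpow_mul hs.le, ← Real.rpow_mul hu0.le]
      norm_num
    calc rexp (-u) * (1 + s^2 * u^2) ^ (-(1/4) : ℝ)
        ≤ rexp (-u) * (s^2 * u^2) ^ (-(1/4) : ℝ) := by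
          exact mul_le_mul_of_nonneg_left h1 (Real.exp_pos _).le
      _ = s ^ (-(1/2):ℝ) * (rexp (-u) * u ^ ((1:ℝ)/2 - 1)) := by rw [h2]; ring
  -- integrability of LHS
  have hf : IntegrableOn (fun u : ℝ => rexp (-u) * (1 + s^2 * u^2) ^ (-(1/4) : ℝ))
      (Set.Ioi 0) := by
    apply Integrable.mono hg
    · apply Measurable.aestronglyMeasurable
      fun_prop
    · filter_upwards [ae_restrict_mem measurableSet_Ioi] with u hu
      have := hpt u hu
      have h0 : 0 ≤ rexp (-u) * (1 + s^2 * u^2) ^ (-(1/4) : ℝ) := by positivity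
      have h0' : 0 ≤ s ^ (-(1/2):ℝ) * (rexp (-u) * u ^ ((1:ℝ)/2 - 1)) := by
        have : (0:ℝ) < u := hu
        positivity
      rw [Real.norm_eq_abs, Real.norm_eq_abs, abs_of_nonneg h0, abs_of_nonneg h0']
      exact this
  calc ∫ u in Set.Ioi (0:ℝ), rexp (-u) * (1 + s^2 * u^2) ^ (-(1/4) : ℝ)
      ≤ ∫ u in Set.Ioi (0:ℝ), s ^ (-(1/2):ℝ) * (rexp (-u) * u ^ ((1:ℝ)/2 - 1)) :=
        setIntegral_mono_on hf hg measurableSet_Ioi hpt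
    _ = s ^ (-(1/2):ℝ) * Real.Gamma (1/2) := by
        rw [integral_const_mul, Real.Gamma_eq_integral (by norm_num)]
    _ = Real.sqrt (π / s) := by
        rw [Real.Gamma_one_half_eq, Real.sqrt_div Real.pi_nonneg s,
          Real.rpow_neg hs.le, ← Real.sqrt_eq_rpow]
        ring
end

section
/- For every σ with 0 ≤ σ ≤ 2π, ∫_0^∞ e^{−u} (1 + σ² u²)^{−1/4} du ≤ exp(−σ²/700). -/
/-!
Since `G ≤ 1`, the integrand is at most `e^{-u}`, whose integral is `1`. On `[1, 2]` one gains
more: there `(1 + σ²u²)^{-1/4} ≤ (1 + σ²)^{-1/4} ≤ 1 - σ²/67` (valid for `σ² ≤ 40`, which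
`σ ≤ 2π` guarantees) and `e^{-u} ≥ e^{-2} > 1/9`, so the integrand falls short of `e^{-u}` by at
least `σ²/700`. Hence the integral is at most `1 - σ²/700 ≤ exp(-σ²/700)`.
-/

open MeasureTheory Real Set

lemma one_add_div_pow_four_le {x : ℝ} (hx0 : 0 ≤ x) (hx : x ≤ 40) :
    (1 + x / 27) ^ 4 ≤ 1 + x := by
  nlinarith [mul_nonneg hx0 hx0, mul_nonneg (mul_nonneg hx0 hx0) hx0,
    mul_nonneg hx0 (sub_nonneg.2 hx), mul_nonneg (mul_nonneg hx0 hx0) (sub_nonneg.2 hx),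
    mul_nonneg (mul_nonneg (mul_nonneg hx0 hx0) hx0) (sub_nonneg.2 hx)]

lemma one_add_div_le_rpow_quarter {x : ℝ} (hx0 : 0 ≤ x) (hx : x ≤ 40) :
    1 + x / 27 ≤ (1 + x) ^ (1/4 : ℝ) := by
  rw [one_div, le_rpow_inv_iff_of_pos (by positivity) (by positivity) four_pos]
  exact_mod_cast one_add_div_pow_four_le hx0 hx

lemma one_add_rpow_neg_quarter_le {x : ℝ} (hx0 : 0 ≤ x) (hx : x ≤ 40) :
    (1 + x) ^ (-(1/4) : ℝ) ≤ 1 - x / 67 := by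
  have hpos : 0 < 1 + x / 27 := by positivity
  calc (1 + x) ^ (-(1/4) : ℝ) = ((1 + x) ^ (1/4 : ℝ))⁻¹ := rpow_neg (by positivity) _
    _ ≤ (1 + x / 27)⁻¹ := inv_anti₀ hpos (one_add_div_le_rpow_quarter hx0 hx)
    _ ≤ 1 - x / 67 := by rw [inv_le_iff_one_le_mul₀ hpos]; nlinarith

lemma exp_neg_two_gt : 1 / 9 < exp (-2) := by
  rw [exp_neg, one_div, inv_lt_inv₀ (by norm_num) (exp_pos 2)]
  calc exp 2 = exp 1 ^ 2 := by rw [← exp_nat_mul]; norm_num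
    _ < 3 ^ 2 := by gcongr; exact exp_one_lt_three
    _ = 9 := by norm_num

lemma exp_neg_mul_rpow_le_sub_indicator {σ : ℝ} (hσ : σ ^ 2 ≤ 40) (u : ℝ) :
    exp (-u) * (1 + σ ^ 2 * u ^ 2) ^ (-(1/4) : ℝ)
      ≤ exp (-u) - (Icc 1 2).indicator (fun _ ↦ σ ^ 2 / 700) u := by
  by_cases hu : u ∈ Icc (1:ℝ) 2
  · rw [indicator_of_mem hu]
    obtain ⟨hu1, hu2⟩ := hu
    have hG : (1 + σ ^ 2 * u ^ 2) ^ (-(1/4) : ℝ) ≤ 1 - σ ^ 2 / 67 :=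
      calc (1 + σ ^ 2 * u ^ 2) ^ (-(1/4) : ℝ) ≤ (1 + σ ^ 2) ^ (-(1/4) : ℝ) :=
            rpow_le_rpow_of_nonpos (by positivity)
              (by nlinarith [mul_le_mul_of_nonneg_left (one_le_pow₀ (n := 2) hu1) (sq_nonneg σ)])
              (by norm_num)
        _ ≤ 1 - σ ^ 2 / 67 := one_add_rpow_neg_quarter_le (sq_nonneg σ) hσ
    have hexp : 1 / 9 < exp (-u) :=
      exp_neg_two_gt.trans_le (exp_le_exp.2 (neg_le_neg hu2))
    nlinarith [mul_le_mul_of_nonneg_left hG (exp_pos (-u)).le, sq_nonneg σ]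
  · rw [indicator_of_notMem hu, sub_zero]
    exact mul_le_of_le_one_right (exp_pos _).le
      (rpow_le_one_of_one_le_of_nonpos (by nlinarith [sq_nonneg (σ * u)]) (by norm_num))

lemma integrable_indicator_Icc_const (a b c : ℝ) :
    Integrable ((Icc a b).indicator fun _ ↦ c) :=
  (integrableOn_const (by simp)).integrable_indicator measurableSet_Icc

lemma integral_exp_neg_sub_indicator {a b : ℝ} (ha : 0 < a) (hab : a ≤ b) (c : ℝ) :
    ∫ u in Ioi 0, (exp (-u) - (Icc a b).indicator (fun _ ↦ c) u) = 1 - (b - a) * c := by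
  have hsub : Icc a b ⊆ Ioi 0 := fun u hu ↦ ha.trans_le hu.1
  rw [integral_sub (integrableOn_exp_neg_Ioi 0) (integrable_indicator_Icc_const a b c).integrableOn,
    integral_exp_neg_Ioi_zero, setIntegral_indicator measurableSet_Icc,
    inter_eq_self_of_subset_right hsub, setIntegral_const]
  simp [hab]

theorem stmt16 (σ : ℝ) (hσ0 : 0 ≤ σ) (hσ : σ ≤ 2 * π) :
    ∫ u in Set.Ioi (0:ℝ), Real.exp (-u) * (1 + σ^2 * u^2) ^ (-(1/4) : ℝ)
      ≤ Real.exp (-σ^2 / 700) := by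
  have hσ40 : σ ^ 2 ≤ 40 := by nlinarith [pi_lt_d2]
  have hmajorant : IntegrableOn (fun u ↦ exp (-u) - (Icc 1 2).indicator (fun _ ↦ σ ^ 2 / 700) u)
      (Ioi 0) :=
    (integrableOn_exp_neg_Ioi 0).sub (integrable_indicator_Icc_const 1 2 _).integrableOn
  calc ∫ u in Ioi 0, exp (-u) * (1 + σ ^ 2 * u ^ 2) ^ (-(1/4) : ℝ)
      ≤ ∫ u in Ioi 0, (exp (-u) - (Icc 1 2).indicator (fun _ ↦ σ ^ 2 / 700) u) :=
        integral_mono_of_nonneg (.of_forall fun u ↦ by positivity) hmajorant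
          (.of_forall (exp_neg_mul_rpow_le_sub_indicator hσ40))
    _ = 1 - σ ^ 2 / 700 := by rw [integral_exp_neg_sub_indicator one_pos one_le_two]; ring
    _ ≤ exp (-σ ^ 2 / 700) := by linarith [add_one_le_exp (-σ ^ 2 / 700)]
end
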